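/- Let Γ₊ be the set of eventually-zero binary sequences whose last 1 is at an odd position, together with 0^∞, and let Ω be a set of eventually-zero binary sequences with Ω Δ Γ₊ finite. Then there exists an even integer n such that for every prefix x of length n with x0^∞ ∈ Ω and every eventually-zero binary sequence y: the concatenation xy lies in Ω if and only if y lies in Γ₊. -/
import Mathlib


/-- A binary sequence (indexed from 1: index `n` is position `n+1`) is eventually zero. -/
def EvZero (x : ℕ → Bool) : Prop := ∃ N, ∀ n ≥ N, x n = false

/-- `n` is the index of the last 1 of `x` (the last 1 is at position `n+1`). -/
def LastOne (x : ℕ → Bool) (n : ℕ) : Prop := x n = true ∧ ∀ m > n, x m = false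

/-- Γ₊ : the zero sequence together with the sequences whose last 1 is at an odd position. -/
def GammaPlus (x : ℕ → Bool) : Prop :=
  (∀ n, x n = false) ∨ ∃ n, LastOne x n ∧ Odd (n + 1)

/-- Γ̃₊ = Γ₊ \ {0^∞} : the sequences whose last 1 is at an odd position. -/
def GammaTilde (x : ℕ → Bool) : Prop := GammaPlus x ∧ ¬ (∀ n, x n = false)

/-- Prepend the digit `d` to the sequence `x`. -/
def prepend (d : Bool) (x : ℕ → Bool) : ℕ → Bool := fun n => if n = 0 then d else x (n - 1)

/-- Concatenate a finite word `x` with an infinite sequence `y`. -/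
def appendSeq (x : List Bool) (y : ℕ → Bool) : ℕ → Bool :=
  fun k => if h : k < x.length then x.get ⟨k, h⟩ else y (k - x.length)

/-- The sequence 0^∞. -/
def zeroSeq : ℕ → Bool := fun _ => false

lemma evzero_of_gammaPlus {x : ℕ → Bool} (h : GammaPlus x) : EvZero x := by
  rcases h with h | ⟨k, hk, _⟩
  · exact ⟨0, fun n _ => h n⟩
  · exact ⟨k + 1, fun n hn => hk.2 n (by omega)⟩

lemma lastOne_unique {z : ℕ → Bool} {a b : ℕ} (ha : LastOne z a) (hb : LastOne z b) :
    a = b := by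
  rcases lt_trichotomy a b with h | h | h
  · have := ha.2 b h; rw [hb.1] at this; exact absurd this (by simp)
  · exact h
  · have := hb.2 a h; rw [ha.1] at this; exact absurd this (by simp)

lemma gammaPlus_iff_odd {z : ℕ → Bool} {m : ℕ} (hm : LastOne z m) :
    GammaPlus z ↔ Odd (m + 1) := by
  constructor
  · rintro (h | ⟨k, hk, hodd⟩)
    · have := h m; rw [hm.1] at this; exact absurd this (by simp)
    · rwa [lastOne_unique hm hk]
  · intro h; exact Or.inr ⟨m, hm, h⟩

lemma uniform_bound (S : Set (ℕ → Bool)) (hS : S.Finite) (h : ∀ z ∈ S, EvZero z) :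
    ∃ N, ∀ z ∈ S, ∀ k ≥ N, z k = false := by
  classical
  refine ⟨hS.toFinset.sup (fun z => if hz : EvZero z then hz.choose else 0), ?_⟩
  intro z hz k hk
  have hzz := h z hz
  have hle : (if hz' : EvZero z then hz'.choose else 0) ≤
      hS.toFinset.sup (fun z => if hz' : EvZero z then hz'.choose else 0) :=
    Finset.le_sup (f := fun z => if hz' : EvZero z then hz'.choose else 0) (hS.mem_toFinset.mpr hz)
  rw [dif_pos hzz] at hle
  exact hzz.choose_spec k (le_trans hle hk)

lemma appendSeq_ge (x : List Bool) (y : ℕ → Bool) (k : ℕ) (h : x.length ≤ k) :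
    appendSeq x y k = y (k - x.length) := dif_neg (by omega)

/-- If Ω has finite symmetric difference with Γ₊, then there is an even `n` such that for
every prefix `x` of length `n` with `x0^∞ ∈ Ω` and every eventually-zero `y`,
`xy ∈ Ω ↔ y ∈ Γ₊`. -/
theorem prefix_stabilization (Ω : Set (ℕ → Bool)) (hΩ : ∀ x ∈ Ω, EvZero x)
    (hfin : (symmDiff Ω {x | GammaPlus x}).Finite) :
    ∃ n : ℕ, Even n ∧ ∀ x : List Bool, x.length = n →
      appendSeq x zeroSeq ∈ Ω →
      ∀ y : ℕ → Bool, EvZero y → (appendSeq x y ∈ Ω ↔ GammaPlus y) := by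
  classical
  obtain ⟨N, hN⟩ := uniform_bound _ hfin (by
    intro z hz
    rw [Set.mem_symmDiff] at hz
    rcases hz with ⟨hz, _⟩ | ⟨hz, _⟩
    · exact hΩ z hz
    · exact evzero_of_gammaPlus hz)
  refine ⟨2 * N, ⟨N, two_mul N⟩, ?_⟩
  intro x hxlen hx0 y hy
  by_cases hz : ∀ m, y m = false
  · have hyz : y = zeroSeq := funext fun m => hz m
    rw [hyz]
    exact iff_of_true hx0 (Or.inl fun _ => rfl)
  · push_neg at hz
    obtain ⟨m0, hm0⟩ := hz
    rw [Bool.ne_false_iff] at hm0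
    obtain ⟨M, hM⟩ := hy
    set m := Nat.findGreatest (fun k => y k = true) M with hmdef
    have hm0M : m0 ≤ M := by
      by_contra h
      have := hM m0 (by omega)
      rw [hm0] at this; exact absurd this (by simp)
    have hym : y m = true := Nat.findGreatest_spec (P := fun k => y k = true) hm0M hm0
    have hlast : LastOne y m := by
      refine ⟨hym, fun k hk => ?_⟩
      by_cases hkM : k ≤ M
      · have := Nat.findGreatest_is_greatest (P := fun k => y k = true) hk hkM
        simpa using this
      · exact hM k (by omega)
    set z := appendSeq x y with hzdef
    have hz1 : z (2 * N + m) = true := by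
      rw [hzdef, appendSeq_ge x y _ (by omega)]
      rw [hxlen]
      simpa using hym
    have hzlast : LastOne z (2 * N + m) := by
      refine ⟨hz1, fun k hk => ?_⟩
      rw [hzdef, appendSeq_ge x y _ (by omega), hxlen]
      exact hlast.2 _ (by omega)
    have hznotS : z ∉ symmDiff Ω {x | GammaPlus x} := by
      intro h
      have := hN z h (2 * N + m) (by omega)
      rw [hz1] at this; exact absurd this (by simp)
    rw [Set.mem_symmDiff] at hznotS
    push_neg at hznotS
    have hiff : z ∈ Ω ↔ GammaPlus z := by
      constructor
      · intro h; exact hznotS.1 h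
      · intro h
        by_contra hc
        exact hc (hznotS.2 h)
    rw [hiff, gammaPlus_iff_odd hzlast, gammaPlus_iff_odd hlast]
    constructor
    · rintro ⟨k, hk⟩; exact ⟨k - N, by omega⟩
    · rintro ⟨k, hk⟩; exact ⟨k + N, by omega⟩
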